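/- Given r ∈ (0,1) and q ∈ [0,1), setting p = √(1/r² + ((1-r²)/(2r²q))²) - (1-r²)/(2r²q) (for q > 0) one has p ∈ [0,1), q = p(1-r²)/(1-r²p²), and the corresponding radius is ρ = (1 + r² - √(1 + (4q²-2)r² + r⁴))/(2r). -/

import Mathlib

/-!
Clearing denominators, `q = p (1 - r²) / (1 - r² p²)` is the quadratic equation
`r² q p² + (1 - r²) p = q`, and the given `p` is its positive root; it lies in `[0, 1)` because
the quadratic is negative at `0` and positive at `1`. The root formula also gives
`√(1 + (4q² - 2) r² + r⁴) = 2 r² q p + 1 - r²`, so the claimed radius is `r (1 - q p)`, and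
`1 - p² = (1 - q p) (1 - r² p²)` is again the quadratic equation.
-/

lemma Real.sqrt_add_div_sq_sub_div {a b d : ℝ} (hd : 0 < d) :
    √(a + (b / d) ^ 2) - b / d = (√(a * d ^ 2 + b ^ 2) - b) / d := by
  have hrad : a + (b / d) ^ 2 = (a * d ^ 2 + b ^ 2) / d ^ 2 := by field_simp
  rw [hrad, Real.sqrt_div' _ (by positivity), Real.sqrt_sq hd.le, sub_div]

/-- The larger root of `a * x ^ 2 + b * x = c` when `0 < a`. -/
noncomputable def posRoot (a b c : ℝ) : ℝ := (√(b ^ 2 + 4 * a * c) - b) / (2 * a)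

section posRoot

variable {a b c : ℝ}

lemma two_mul_mul_posRoot_add (ha : a ≠ 0) :
    2 * a * posRoot a b c + b = √(b ^ 2 + 4 * a * c) := by
  rw [posRoot]
  field_simp
  ring

lemma posRoot_spec (ha : 0 < a) (hdisc : 0 ≤ b ^ 2 + 4 * a * c) :
    a * posRoot a b c ^ 2 + b * posRoot a b c = c := by
  have hsqrt := two_mul_mul_posRoot_add (b := b) (c := c) ha.ne'
  have hsq := Real.sq_sqrt hdisc
  rw [← hsqrt] at hsq
  nlinarith

lemma posRoot_nonneg (ha : 0 < a) (hc : 0 ≤ c) : 0 ≤ posRoot a b c := by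
  have : b ≤ √(b ^ 2 + 4 * a * c) :=
    Real.le_sqrt_of_sq_le (by nlinarith)
  exact div_nonneg (by linarith) (by positivity)

lemma posRoot_lt_one (ha : 0 < a) (hc : 0 ≤ c) (hcab : c < a + b) : posRoot a b c < 1 := by
  have : √(b ^ 2 + 4 * a * c) < 2 * a + b :=
    (Real.sqrt_lt' (by linarith)).2 (by nlinarith)
  rw [posRoot, div_lt_one (by positivity)]
  linarith

end posRoot

theorem disk_automorphism_solve (r q : ℝ) (hr0 : 0 < r) (hr1 : r < 1) (hq0 : 0 < q) (hq1 : q < 1)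
    (p : ℝ)
    (hp : p = Real.sqrt (1 / r ^ 2 + ((1 - r ^ 2) / (2 * r ^ 2 * q)) ^ 2)
            - (1 - r ^ 2) / (2 * r ^ 2 * q)) :
    (0 ≤ p ∧ p < 1) ∧ q = p * (1 - r ^ 2) / (1 - r ^ 2 * p ^ 2) ∧
      r * (1 - p ^ 2) / (1 - r ^ 2 * p ^ 2)
        = (1 + r ^ 2 - Real.sqrt (1 + (4 * q ^ 2 - 2) * r ^ 2 + r ^ 4)) / (2 * r) := by
  have ha : 0 < r ^ 2 * q := by positivity
  have hpr : p = posRoot (r ^ 2 * q) (1 - r ^ 2) q := by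
    have hrad : 1 / r ^ 2 * (2 * r ^ 2 * q) ^ 2 + (1 - r ^ 2) ^ 2
        = (1 - r ^ 2) ^ 2 + 4 * (r ^ 2 * q) * q := by
      field_simp
      ring
    rw [hp, Real.sqrt_add_div_sq_sub_div (by positivity), hrad, posRoot]
    ring
  have hdisc : (1 - r ^ 2) ^ 2 + 4 * (r ^ 2 * q) * q = 1 + (4 * q ^ 2 - 2) * r ^ 2 + r ^ 4 := by
    ring
  have hp0 : 0 ≤ p := hpr ▸ posRoot_nonneg ha hq0.le
  have hr2 : r ^ 2 < 1 := pow_lt_one₀ hr0.le hr1 two_ne_zero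
  have hp1 : p < 1 :=
    hpr ▸ posRoot_lt_one ha hq0.le (by nlinarith [mul_pos (sub_pos.2 hq1) (sub_pos.2 hr2)])
  have hquad : r ^ 2 * q * p ^ 2 + (1 - r ^ 2) * p = q := hpr ▸ posRoot_spec ha (by positivity)
  have hsqrt : 2 * (r ^ 2 * q) * p + (1 - r ^ 2) = √(1 + (4 * q ^ 2 - 2) * r ^ 2 + r ^ 4) :=
    hdisc ▸ hpr ▸ two_mul_mul_posRoot_add ha.ne'
  have hden : 0 < 1 - r ^ 2 * p ^ 2 :=
    sub_pos.2 ((mul_le_of_le_one_right (sq_nonneg r) (pow_le_one₀ hp0 hp1.le)).trans_lt hr2)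
  refine ⟨⟨hp0, hp1⟩, ?_, ?_⟩
  · rw [eq_div_iff hden.ne']
    linear_combination -hquad
  · rw [← hsqrt, div_eq_div_iff hden.ne' (by positivity)]
    linear_combination -2 * r ^ 2 * p * hquad
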